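/- There exists N such that for all n ≥ N and every odd integer d with 3·2^{n−1} − 1 < d < 2^{n+1} − 7, the 2-density of the set D := {i : 1 ≤ i ≤ d, i odd} \ {2^n − 1, 3·2^{n−1} − 1} equals 1/(n−1); that is, every solution U of any length ℓ for D satisfies (n−1)·s(U) ≥ ℓ, and some solution attains (n−1)·s(U) = ℓ. -/

import Mathlib

/-- The binary weight `s₂(m)`: the sum of the base-2 digits of `m`. -/
def s2 (m : ℕ) : ℕ := (Nat.digits 2 m).sum

/-- The shift map on `{0, …, 2^ℓ - 1}`: it fixes `2^ℓ - 1` and sends any other `i`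
to the remainder of `2·i` modulo `2^ℓ - 1`. -/
def shift2 (ℓ i : ℕ) : ℕ := if i = 2 ^ ℓ - 1 then i else (2 * i) % (2 ^ ℓ - 1)

/-- `U : ℕ → ℕ` (supported on `D`) is a solution of length `ℓ` for `D`:
`0 ≤ u_d ≤ 2^ℓ - 1` and `∑ d·u_d` is a positive multiple of `2^ℓ - 1`. -/
structure IsSolution (D : Finset ℕ) (ℓ : ℕ) (U : ℕ → ℕ) : Prop where
  len_pos : 1 ≤ ℓ
  bounded : ∀ d, U d ≤ 2 ^ ℓ - 1
  supp_sub : ∀ d, d ∉ D → U d = 0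
  dvd : (2 ^ ℓ - 1) ∣ ∑ d ∈ D, d * U d
  pos : 0 < ∑ d ∈ D, d * U d

/-- The weight `s(U) = ∑_{d ∈ D} s₂(u_d)` of a solution. -/
def weight (D : Finset ℕ) (U : ℕ → ℕ) : ℕ := ∑ d ∈ D, s2 (U d)

/-- The support map `φ_U(k) = (∑_{d ∈ D} d·δ^k(u_d)) / (2^ℓ - 1)` of a solution,
viewed as an `ℓ`-periodic function on `ℕ`. -/
def supportMap (D : Finset ℕ) (ℓ : ℕ) (U : ℕ → ℕ) (k : ℕ) : ℕ :=
  (∑ d ∈ D, d * (shift2 ℓ)^[k] (U d)) / (2 ^ ℓ - 1)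

/-- A solution is irreducible when its support map is injective on `ℤ/ℓℤ`,
i.e. injective on `{0, …, ℓ-1}`. -/
def IrreducibleSol (D : Finset ℕ) (ℓ : ℕ) (U : ℕ → ℕ) : Prop :=
  Set.InjOn (supportMap D ℓ U) ↑(Finset.range ℓ)

/-- `U` is a shift of `V` (coordinatewise iterate of the shift map). -/
def IsShiftOf (ℓ : ℕ) (U V : ℕ → ℕ) : Prop :=
  ∃ k, ∀ d, U d = (shift2 ℓ)^[k] (V d)

/-- The set of odd integers `1 ≤ i ≤ d`. -/
def oddUpTo (d : ℕ) : Finset ℕ := (Finset.range (d + 1)).filter (fun i => i % 2 = 1)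

/-- `D = {i : 1 ≤ i ≤ 2^{n+1} - 3, i odd}`. -/
def oddD (n : ℕ) : Finset ℕ := oddUpTo (2 ^ (n + 1) - 3)

/-- The solution with `u_a = 1` and all other coordinates `0`. -/
def sol1 (a : ℕ) : ℕ → ℕ := fun d => if d = a then 1 else 0

/-- The solution with `u_a = x`, `u_b = y` and all other coordinates `0`. -/
def sol2 (a x b y : ℕ) : ℕ → ℕ := fun d => if d = a then x else if d = b then y else 0

/-- The solution with `u_a = x`, `u_b = y`, `u_c = z` and all other coordinates `0`. -/
def sol3 (a x b y c z : ℕ) : ℕ → ℕ :=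
  fun d => if d = a then x else if d = b then y else if d = c then z else 0

/-! Let `φ_k = supportMap D ℓ U k` and `p = 2 ^ (n - 1)`. Shifting every coordinate doubles
`∑ d * u_d` and subtracts `2 ^ ℓ - 1` once for each `i ∈ B_k = topSet D ℓ U k`, the indices whose
coordinate has leading binary digit `1`; so `φ_(k+1) + ∑_(i ∈ B_k) i = 2 * φ_k`, and over one
period the sizes `|B_k|` add up to the weight `s(U)`. The potential `Φ(x) = max (2p * ρ(x)) (16x)`,
where `ρ(2 ^ G * z) = 2 ^ G * τ(z)` for odd `z` and a step function `τ`, satisfies `Φ(2x) = 2Φ(x)`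
and `Φ(y + i) ≤ p * Φ(y)` for every `i ∈ D`. Hence `2 ^ ℓ * Φ(φ_0) ≤ p ^ s(U) * Φ(φ_ℓ)`, and
`φ_ℓ = φ_0` gives `ℓ ≤ (n - 1) * s(U)`. Equality holds for the solution of length `n - 1` with
`u_(p-1) = 1`. -/

open Finset

section BinaryWeight

lemma s2_two_mul_add (m : ℕ) {b : ℕ} (hb : b < 2) : s2 (2 * m + b) = s2 m + b := by
  rcases Nat.eq_zero_or_pos (2 * m + b) with h | h
  · obtain ⟨rfl, rfl⟩ : m = 0 ∧ b = 0 := by omega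
    rfl
  · rw [s2, add_comm, Nat.digits_add 2 (by norm_num) b m hb (by omega), List.sum_cons, s2, add_comm]

/-- The number with binary digits `c 0, …, c (m - 1)`, most significant first. -/
def horner (c : ℕ → ℕ) : ℕ → ℕ
  | 0 => 0
  | m + 1 => 2 * horner c m + c m

lemma s2_horner {c : ℕ → ℕ} (hc : ∀ k, c k < 2) (m : ℕ) :
    s2 (horner c m) = ∑ k ∈ range m, c k := by
  induction m with
  | zero => rfl
  | succ m ih => rw [horner, s2_two_mul_add _ (hc m), ih, sum_range_succ]

end BinaryWeight

section Shift

variable {ℓ : ℕ}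

def topBit (ℓ v : ℕ) : ℕ := if 2 ^ (ℓ - 1) ≤ v then 1 else 0

lemma topBit_lt_two (ℓ v : ℕ) : topBit ℓ v < 2 := by
  unfold topBit; split <;> omega

lemma two_pow_eq_two_mul (hℓ : 1 ≤ ℓ) : 2 ^ ℓ = 2 * 2 ^ (ℓ - 1) := by
  rw [← pow_succ']; congr 1; omega

lemma two_pow_sub_one_pos (hℓ : 1 ≤ ℓ) : 0 < 2 ^ ℓ - 1 :=
  Nat.sub_pos_of_lt (Nat.one_lt_two_pow (by omega))

lemma shift2_add_mul_topBit (hℓ : 1 ≤ ℓ) {v : ℕ} (hv : v ≤ 2 ^ ℓ - 1) :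
    shift2 ℓ v + (2 ^ ℓ - 1) * topBit ℓ v = 2 * v := by
  have h2 := two_pow_eq_two_mul hℓ
  unfold shift2 topBit
  by_cases hM : v = 2 ^ ℓ - 1
  · rw [if_pos hM, if_pos (by omega)]; omega
  by_cases htop : 2 ^ (ℓ - 1) ≤ v
  · rw [if_neg hM, if_pos htop, Nat.mod_eq_sub_mod (by omega), Nat.mod_eq_of_lt (by omega)]
    omega
  · rw [if_neg hM, if_neg htop, Nat.mod_eq_of_lt (by omega)]
    omega

lemma shift2_le {v : ℕ} (hv : v ≤ 2 ^ ℓ - 1) : shift2 ℓ v ≤ 2 ^ ℓ - 1 := by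
  unfold shift2
  split
  · exact hv
  · exact (Nat.mod_lt _ (by omega)).le

lemma shift2_ne_zero (hℓ : 1 ≤ ℓ) {v : ℕ} (hv : v ≤ 2 ^ ℓ - 1) (hv0 : v ≠ 0) :
    shift2 ℓ v ≠ 0 := by
  have := shift2_add_mul_topBit hℓ hv
  have h2 := two_pow_eq_two_mul hℓ
  unfold topBit at this
  split at this <;> omega

lemma iterate_shift2_le {u : ℕ} (hu : u ≤ 2 ^ ℓ - 1) (k : ℕ) :
    (shift2 ℓ)^[k] u ≤ 2 ^ ℓ - 1 := by
  induction k with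
  | zero => exact hu
  | succ k ih => rw [Function.iterate_succ_apply']; exact shift2_le ih

lemma iterate_shift2_ne_zero (hℓ : 1 ≤ ℓ) {u : ℕ} (hu : u ≤ 2 ^ ℓ - 1) (hu0 : u ≠ 0) (k : ℕ) :
    (shift2 ℓ)^[k] u ≠ 0 := by
  induction k with
  | zero => exact hu0
  | succ k ih =>
    rw [Function.iterate_succ_apply']
    exact shift2_ne_zero hℓ (iterate_shift2_le hu k) ih

lemma iterate_shift2_of_lt {u : ℕ} (hu : u < 2 ^ ℓ - 1) (k : ℕ) :
    (shift2 ℓ)^[k] u = 2 ^ k * u % (2 ^ ℓ - 1) := by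
  induction k with
  | zero => simp [Nat.mod_eq_of_lt hu]
  | succ k ih =>
    have hlt : 2 ^ k * u % (2 ^ ℓ - 1) < 2 ^ ℓ - 1 := Nat.mod_lt _ (by omega)
    rw [Function.iterate_succ_apply', ih, shift2, if_neg hlt.ne, Nat.mul_mod_mod, pow_succ,
      mul_comm _ 2, mul_assoc]

lemma iterate_shift2_period {u : ℕ} (hu : u ≤ 2 ^ ℓ - 1) :
    (shift2 ℓ)^[ℓ] u = u := by
  rcases hu.lt_or_eq with hu | rfl
  · have h2 : 2 ^ ℓ * u = u + (2 ^ ℓ - 1) * u := by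
      have := Nat.one_le_two_pow (n := ℓ)
      zify [this]; ring
    rw [iterate_shift2_of_lt hu, h2, Nat.add_mul_mod_self_left, Nat.mod_eq_of_lt hu]
  · exact Function.iterate_fixed (by simp [shift2]) ℓ

/-- Running the shift map for `k` steps reads off the `k` leading binary digits of `u`. -/
lemma two_pow_mul_eq_iterate_add (hℓ : 1 ≤ ℓ) {u : ℕ} (hu : u ≤ 2 ^ ℓ - 1) (k : ℕ) :
    2 ^ k * u =
      (shift2 ℓ)^[k] u + (2 ^ ℓ - 1) * horner (fun j ↦ topBit ℓ ((shift2 ℓ)^[j] u)) k := by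
  induction k with
  | zero => simp [horner]
  | succ k ih =>
    have := shift2_add_mul_topBit hℓ (iterate_shift2_le hu k)
    rw [pow_succ', mul_assoc, ih, mul_add, ← this, Function.iterate_succ_apply', horner]
    ring

lemma sum_topBit_iterate_shift2 (hℓ : 1 ≤ ℓ) {u : ℕ} (hu : u ≤ 2 ^ ℓ - 1) :
    ∑ k ∈ range ℓ, topBit ℓ ((shift2 ℓ)^[k] u) = s2 u := by
  have h := two_pow_mul_eq_iterate_add hℓ hu ℓ
  rw [iterate_shift2_period hu] at h
  have hu_eq : u = horner (fun j ↦ topBit ℓ ((shift2 ℓ)^[j] u)) ℓ := by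
    refine Nat.eq_of_mul_eq_mul_left (two_pow_sub_one_pos hℓ) ?_
    zify [Nat.one_le_two_pow (n := ℓ)] at h ⊢
    linear_combination h
  rw [← s2_horner (fun k ↦ topBit_lt_two ℓ _), ← hu_eq]

end Shift

section Orbit

variable {D : Finset ℕ} {ℓ : ℕ} {U : ℕ → ℕ}

/-- The numerator of `supportMap D ℓ U k`. -/
def orbitSum (D : Finset ℕ) (ℓ : ℕ) (U : ℕ → ℕ) (k : ℕ) : ℕ :=
  ∑ i ∈ D, i * (shift2 ℓ)^[k] (U i)

def topSet (D : Finset ℕ) (ℓ : ℕ) (U : ℕ → ℕ) (k : ℕ) : Finset ℕ :=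
  {i ∈ D | 2 ^ (ℓ - 1) ≤ (shift2 ℓ)^[k] (U i)}

lemma orbitSum_succ_add (hU : IsSolution D ℓ U) (k : ℕ) :
    orbitSum D ℓ U (k + 1) + (2 ^ ℓ - 1) * ∑ i ∈ topSet D ℓ U k, i = 2 * orbitSum D ℓ U k := by
  unfold orbitSum topSet
  rw [sum_filter, mul_sum, mul_sum, ← sum_add_distrib]
  refine sum_congr rfl fun i _ ↦ ?_
  have h := shift2_add_mul_topBit hU.len_pos (iterate_shift2_le (hU.bounded i) k)
  unfold topBit at h
  rw [Function.iterate_succ_apply']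
  split_ifs at h ⊢ <;> linear_combination i * h

lemma dvd_orbitSum (hU : IsSolution D ℓ U) (k : ℕ) : 2 ^ ℓ - 1 ∣ orbitSum D ℓ U k := by
  induction k with
  | zero => simpa [orbitSum] using hU.dvd
  | succ k ih =>
    have h := orbitSum_succ_add hU k
    exact (Nat.dvd_add_left (dvd_mul_right _ _)).mp (h ▸ ih.mul_left 2)

lemma orbitSum_pos (hU : IsSolution D ℓ U) (k : ℕ) : 0 < orbitSum D ℓ U k := by
  obtain ⟨i, hi, hpos⟩ := exists_ne_zero_of_sum_ne_zero hU.pos.ne'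
  replace hpos := Nat.pos_of_ne_zero hpos
  have hUi : (shift2 ℓ)^[k] (U i) ≠ 0 :=
    iterate_shift2_ne_zero hU.len_pos (hU.bounded i) (Nat.pos_of_mul_pos_left hpos).ne' k
  exact lt_of_lt_of_le (Nat.mul_pos (Nat.pos_of_mul_pos_right hpos) (Nat.pos_of_ne_zero hUi))
    (single_le_sum (f := fun i ↦ i * (shift2 ℓ)^[k] (U i)) (fun _ _ ↦ Nat.zero_le _) hi)

lemma orbitSum_period (hU : IsSolution D ℓ U) : orbitSum D ℓ U ℓ = orbitSum D ℓ U 0 :=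
  sum_congr rfl fun i _ ↦ by rw [iterate_shift2_period (hU.bounded i), Function.iterate_zero_apply]

lemma supportMap_eq_orbitSum_div (k : ℕ) :
    supportMap D ℓ U k = orbitSum D ℓ U k / (2 ^ ℓ - 1) := rfl

lemma supportMap_succ_add (hU : IsSolution D ℓ U) (k : ℕ) :
    supportMap D ℓ U (k + 1) + ∑ i ∈ topSet D ℓ U k, i = 2 * supportMap D ℓ U k := by
  refine Nat.eq_of_mul_eq_mul_left (two_pow_sub_one_pos hU.len_pos) ?_
  rw [supportMap_eq_orbitSum_div, supportMap_eq_orbitSum_div, mul_add, mul_left_comm,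
    Nat.mul_div_cancel' (dvd_orbitSum hU _), Nat.mul_div_cancel' (dvd_orbitSum hU _)]
  exact orbitSum_succ_add hU k

lemma supportMap_pos (hU : IsSolution D ℓ U) (k : ℕ) : 0 < supportMap D ℓ U k :=
  Nat.div_pos (Nat.le_of_dvd (orbitSum_pos hU k) (dvd_orbitSum hU k))
    (two_pow_sub_one_pos hU.len_pos)

lemma supportMap_period (hU : IsSolution D ℓ U) : supportMap D ℓ U ℓ = supportMap D ℓ U 0 :=
  congrArg (· / (2 ^ ℓ - 1)) (orbitSum_period hU)

lemma sum_card_topSet (hU : IsSolution D ℓ U) :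
    ∑ k ∈ range ℓ, #(topSet D ℓ U k) = weight D U := by
  simp only [topSet, card_filter]
  rw [sum_comm]
  exact sum_congr rfl fun i _ ↦ sum_topBit_iterate_shift2 hU.len_pos (hU.bounded i)

end Orbit

section Potential

/-- What the lower bound needs of the elements of `D`, with `p = 2 ^ (n - 1)`. -/
def Admissible (p d : ℕ) : Prop := d % 2 = 1 ∧ d + 9 ≤ 4 * p ∧ d + 1 ≠ 2 * p ∧ d + 1 ≠ 3 * p

def tau (w : ℕ) : ℕ := if w = 1 then 4 else if w ≤ 7 then 8 else 16

lemma four_le_tau (w : ℕ) : 4 ≤ tau w := by unfold tau; split_ifs <;> omega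

lemma tau_le_sixteen (w : ℕ) : tau w ≤ 16 := by unfold tau; split_ifs <;> omega

lemma eight_le_tau {w : ℕ} (hw : w ≠ 1) : 8 ≤ tau w := by unfold tau; split_ifs <;> omega

lemma tau_of_eight_le {w : ℕ} (hw : 8 ≤ w) : tau w = 16 := by unfold tau; split_ifs <;> omega

lemma two_pow_cases (G m : ℕ) :
    4 * 2 ^ G ≤ 2 ^ m ∨ 2 * 2 ^ G = 2 ^ m ∨ 2 ^ G = 2 ^ m ∨ 2 ^ G = 2 * 2 ^ m ∨
      2 ^ G = 4 * 2 ^ m ∨ 8 * 2 ^ m ≤ 2 ^ G := by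
  rcases le_or_gt (G + 2) m with h | h
  · left
    calc 4 * 2 ^ G = 2 ^ (G + 2) := by ring
      _ ≤ 2 ^ m := Nat.pow_le_pow_right two_pos h
  rcases le_or_gt (m + 3) G with h' | h'
  · right; right; right; right; right
    calc 8 * 2 ^ m = 2 ^ (m + 3) := by ring
      _ ≤ 2 ^ G := Nat.pow_le_pow_right two_pos h'
  obtain ⟨j, hj, hG⟩ : ∃ j < 4, G + 1 = m + j := ⟨G + 1 - m, by omega, by omega⟩
  have h2 : 2 * 2 ^ G = 2 ^ m * 2 ^ j := by rw [← pow_succ', hG, pow_add]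
  interval_cases j <;> omega

/-- Compare `2 ^ G` with `p = 2 ^ m`. If `4 * 2 ^ G ≤ p` the left term wins since `tau y ≥ 4`; if
`2 ^ G ≥ 8p`, or `2 ^ G ≥ 2p` and `z ≥ 3`, then `y > 2 ^ G * z - 4p` makes the right term win. In
the remaining cases `y` avoids the small values where `tau y` is small: this is where the excluded
elements `2p - 1` and `3p - 1` matter. -/
lemma two_mul_two_pow_mul_tau_le {m G y z d : ℕ} (hm : 4 ≤ m) (hd : Admissible (2 ^ m) d)
    (hz : z % 2 = 1) (h : y + d = 2 ^ G * z) :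
    2 * (2 ^ G * tau z) ≤ max (2 * 2 ^ m * tau y) (16 * y) := by
  obtain ⟨-, hd4p, hd2p, hd3p⟩ := hd
  have hp : 16 ≤ 2 ^ m := le_trans (by norm_num) (Nat.pow_le_pow_right two_pos hm)
  have hE := two_pow_cases G m
  have hT : 8 * 2 ^ m ≤ 2 * 2 ^ m * tau y ∧ (y ≠ 1 → 16 * 2 ^ m ≤ 2 * 2 ^ m * tau y) ∧
      (8 ≤ y → 32 * 2 ^ m ≤ 2 * 2 ^ m * tau y) :=
    ⟨by nlinarith [four_le_tau y], fun h1 ↦ by nlinarith [eight_le_tau h1],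
      fun h8 ↦ by rw [tau_of_eight_le h8]; omega⟩
  rw [le_max_iff]
  generalize 2 * 2 ^ m * tau y = T at hT
  rcases (show z ≤ 7 ∨ 9 ≤ z by omega) with hz7 | hz9
  · interval_cases z <;> norm_num [tau] at h ⊢ <;> omega
  · rw [tau_of_eight_le (by omega)]
    have : 9 * 2 ^ G ≤ 2 ^ G * z := by rw [mul_comm]; exact Nat.mul_le_mul_left _ hz9
    generalize 2 ^ G * z = X at *
    omega

def rho (x : ℕ) : ℕ := ordProj[2] x * tau (ordCompl[2] x)

def potential (p x : ℕ) : ℕ := max (2 * p * rho x) (16 * x)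

lemma rho_of_odd {x : ℕ} (hx : x % 2 = 1) : rho x = tau x := by
  have h : x.factorization 2 = 0 := Nat.factorization_eq_zero_of_not_dvd (by omega)
  simp [rho, h]

lemma four_le_rho (x : ℕ) : 4 ≤ rho x :=
  le_trans (four_le_tau _) (Nat.le_mul_of_pos_left _ (by positivity))

lemma rho_two_mul {x : ℕ} (hx : x ≠ 0) : rho (2 * x) = 2 * rho x := by
  have h := Nat.ordCompl_self_pow_mul x 1 Nat.prime_two
  rw [pow_one] at h
  rw [rho, rho, h, Nat.ordProj_mul 2 two_ne_zero hx, Nat.Prime.factorization_self Nat.prime_two,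
    pow_one, mul_assoc]

lemma potential_two_mul (p : ℕ) {x : ℕ} (hx : x ≠ 0) :
    potential p (2 * x) = 2 * potential p x := by
  rw [potential, potential, rho_two_mul hx, ← Nat.mul_max_mul_left]
  ring_nf

lemma potential_pos {p : ℕ} (hp : 0 < p) (x : ℕ) : 0 < potential p x :=
  lt_of_lt_of_le (by have := four_le_rho x; positivity) (le_max_left _ _)

lemma potential_add_le {m d : ℕ} (hm : 4 ≤ m) (hd : Admissible (2 ^ m) d) (y : ℕ) :
    potential (2 ^ m) (y + d) ≤ 2 ^ m * potential (2 ^ m) y := by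
  have hp : 16 ≤ 2 ^ m := le_trans (by norm_num) (Nat.pow_le_pow_right two_pos hm)
  have hρy := four_le_rho y
  have ⟨hdodd, hd4p, _⟩ := hd
  have hρ : 2 * rho (y + d) ≤ max (2 * 2 ^ m * rho y) (16 * y) := by
    rcases Nat.mod_two_eq_zero_or_one y with hy | hy
    · rw [rho_of_odd (by omega : (y + d) % 2 = 1)]
      refine le_max_of_le_left ?_
      nlinarith [tau_le_sixteen (y + d)]
    · have hyd : y + d ≠ 0 := by omega
      have hz : ordCompl[2] (y + d) % 2 = 1 :=
        Nat.two_dvd_ne_zero.mp fun h2 ↦ Nat.not_dvd_ordCompl Nat.prime_two hyd h2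
      rw [rho_of_odd hy, rho]
      exact two_mul_two_pow_mul_tau_le hm hd hz (Nat.ordProj_mul_ordCompl_eq_self _ _).symm
  unfold potential
  refine max_le ?_ ?_
  · calc 2 * 2 ^ m * rho (y + d) = 2 ^ m * (2 * rho (y + d)) := by ring
      _ ≤ _ := Nat.mul_le_mul_left _ hρ
  · have := le_max_left (2 * 2 ^ m * rho y) (16 * y)
    have := le_max_right (2 * 2 ^ m * rho y) (16 * y)
    nlinarith

lemma potential_add_sum_le {m : ℕ} (hm : 4 ≤ m) {F : Finset ℕ}
    (hF : ∀ i ∈ F, Admissible (2 ^ m) i) (y : ℕ) :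
    potential (2 ^ m) (y + ∑ i ∈ F, i) ≤ (2 ^ m) ^ #F * potential (2 ^ m) y := by
  induction F using Finset.induction_on with
  | empty => simp
  | insert a F ha ih =>
    rw [sum_insert ha, card_insert_of_notMem ha, ← add_assoc, add_right_comm, pow_succ', mul_assoc]
    refine (potential_add_le hm (hF a (mem_insert_self a F)) _).trans (Nat.mul_le_mul_left _ ?_)
    exact ih fun i hi ↦ hF i (mem_insert_of_mem hi)

end Potential

lemma two_pow_mul_le_of_two_mul_le {g b : ℕ → ℕ} {q : ℕ}
    (h : ∀ k, 2 * g k ≤ q ^ b k * g (k + 1)) (ℓ : ℕ) :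
    2 ^ ℓ * g 0 ≤ q ^ (∑ k ∈ range ℓ, b k) * g ℓ := by
  induction ℓ with
  | zero => simp
  | succ ℓ ih =>
    calc 2 ^ (ℓ + 1) * g 0 = 2 * (2 ^ ℓ * g 0) := by ring
      _ ≤ 2 * (q ^ (∑ k ∈ range ℓ, b k) * g ℓ) := Nat.mul_le_mul_left 2 ih
      _ = q ^ (∑ k ∈ range ℓ, b k) * (2 * g ℓ) := by ring
      _ ≤ q ^ (∑ k ∈ range ℓ, b k) * (q ^ b ℓ * g (ℓ + 1)) := Nat.mul_le_mul_left _ (h ℓ)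
      _ = q ^ (∑ k ∈ range (ℓ + 1), b k) * g (ℓ + 1) := by rw [sum_range_succ, pow_add]; ring

theorem le_mul_weight_of_admissible {m ℓ : ℕ} {D : Finset ℕ} {U : ℕ → ℕ} (hm : 4 ≤ m)
    (hD : ∀ i ∈ D, Admissible (2 ^ m) i) (hU : IsSolution D ℓ U) : ℓ ≤ m * weight D U := by
  have hstep (k : ℕ) : 2 * potential (2 ^ m) (supportMap D ℓ U k) ≤
      (2 ^ m) ^ #(topSet D ℓ U k) * potential (2 ^ m) (supportMap D ℓ U (k + 1)) := by
    rw [← potential_two_mul _ (supportMap_pos hU k).ne', ← supportMap_succ_add hU k]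
    exact potential_add_sum_le hm (fun i hi ↦ hD i (mem_filter.mp hi).1) _
  have h := two_pow_mul_le_of_two_mul_le hstep ℓ
  rw [supportMap_period hU, sum_card_topSet hU, ← pow_mul] at h
  exact (Nat.pow_le_pow_iff_right one_lt_two).mp
    (Nat.le_of_mul_le_mul_right h (potential_pos (by positivity) _))

lemma admissible_of_mem {n d i : ℕ} (hn : 1 ≤ n) (hd : d < 2 ^ (n + 1) - 7)
    (hi : i ∈ ((oddUpTo d).erase (2 ^ n - 1)).erase (3 * 2 ^ (n - 1) - 1)) :
    Admissible (2 ^ (n - 1)) i := by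
  have h2 : 2 ^ n = 2 * 2 ^ (n - 1) := two_pow_eq_two_mul hn
  have h4 : 2 ^ (n + 1) = 4 * 2 ^ (n - 1) := by rw [pow_succ, h2]; ring
  simp only [mem_erase, oddUpTo, mem_filter, mem_range] at hi
  unfold Admissible
  omega

lemma two_pow_pred_sub_one_mem {n d : ℕ} (hn : 2 ≤ n) (hd : 3 * 2 ^ (n - 1) - 1 < d) :
    2 ^ (n - 1) - 1 ∈ ((oddUpTo d).erase (2 ^ n - 1)).erase (3 * 2 ^ (n - 1) - 1) := by
  have h2 : 2 ^ n = 2 * 2 ^ (n - 1) := two_pow_eq_two_mul (by omega)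
  have h2' : 2 ^ (n - 1) = 2 * 2 ^ (n - 1 - 1) := two_pow_eq_two_mul (by omega)
  have := Nat.one_le_two_pow (n := n - 1 - 1)
  simp only [mem_erase, oddUpTo, mem_filter, mem_range]
  omega

lemma sum_mul_sol1 {D : Finset ℕ} {a : ℕ} (ha : a ∈ D) : ∑ i ∈ D, i * sol1 a i = a := by
  simp [sol1, ha]

lemma weight_sol1 {D : Finset ℕ} {a : ℕ} (ha : a ∈ D) : weight D (sol1 a) = 1 := by
  rw [weight, sum_eq_single_of_mem a ha fun b _ hb ↦ by simp [sol1, hb, s2]]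
  simp [sol1, s2]

lemma isSolution_sol1 {D : Finset ℕ} {ℓ : ℕ} (hℓ : 1 ≤ ℓ) (hD : 2 ^ ℓ - 1 ∈ D) :
    IsSolution D ℓ (sol1 (2 ^ ℓ - 1)) where
  len_pos := hℓ
  bounded d := by
    have := Nat.one_lt_two_pow (n := ℓ) (by omega)
    unfold sol1; split <;> omega
  supp_sub d hd := if_neg fun h : d = _ ↦ hd (h ▸ hD)
  dvd := by rw [sum_mul_sol1 hD]
  pos := by rw [sum_mul_sol1 hD]; exact Nat.sub_pos_of_lt (Nat.one_lt_two_pow (by omega))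

/-- For `n` large enough and odd `d` with `3·2^{n−1} − 1 < d < 2^{n+1} − 7`, the
2-density of `D = {i : 1 ≤ i ≤ d, i odd} \ {2^n − 1, 3·2^{n−1} − 1}` is `1/(n−1)`:
every solution of length `ℓ` satisfies `(n−1)·s(U) ≥ ℓ`, and some solution attains
equality. -/
theorem density_case_iii_b :
    ∃ N : ℕ, ∀ n : ℕ, N ≤ n → ∀ d : ℕ, d % 2 = 1 →
      3 * 2 ^ (n - 1) - 1 < d → d < 2 ^ (n + 1) - 7 →
      (∀ ℓ U, IsSolution (((oddUpTo d).erase (2 ^ n - 1)).erase (3 * 2 ^ (n - 1) - 1)) ℓ U →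
        ℓ ≤ (n - 1) * weight (((oddUpTo d).erase (2 ^ n - 1)).erase (3 * 2 ^ (n - 1) - 1)) U) ∧
      (∃ ℓ U, IsSolution (((oddUpTo d).erase (2 ^ n - 1)).erase (3 * 2 ^ (n - 1) - 1)) ℓ U ∧
        ℓ = (n - 1) * weight (((oddUpTo d).erase (2 ^ n - 1)).erase (3 * 2 ^ (n - 1) - 1)) U) := by
  refine ⟨5, fun n hn d _ hdlo hdhi ↦ ⟨fun ℓ U hU ↦ ?_, ?_⟩⟩
  · exact le_mul_weight_of_admissible (m := n - 1) (by omega)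
      (fun i hi ↦ admissible_of_mem (by omega) hdhi hi) hU
  · have hmem := two_pow_pred_sub_one_mem (by omega) hdlo
    exact ⟨n - 1, _, isSolution_sol1 (by omega) hmem, by rw [weight_sol1 hmem, mul_one]⟩
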